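/- arXiv:1905.04907 — 3 statements merged into one kernel-verified Lean document; each statement's English description precedes it below -/
import Mathlib

section
/- For real numbers a < b, the double integral over [a,b]×[a,b] of (2λs + 2ab − (a+b)(λ+s)) / √((λ−a)(b−λ)(s−a)(b−s)) dλ ds equals −π²(b−a)²/2. -/
open MeasureTheory Set

/-!
With `c = (a + b) / 2` the numerator is `2 (λ - c) (s - c) - (b - a)² / 2`, so the integrand is
a difference of two products of one-variable functions and Fubini reduces the claim to
`∫ₐᵇ dx / √((x - a)(b - x)) = π` and `∫ₐᵇ (x - c) dx / √((x - a)(b - x)) = 0`. Both follow from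
the substitution `x = c + (b - a) / 2 · sin θ`, `θ ∈ (-π/2, π/2)`, whose Jacobian cancels the
square root.
-/

open Real

noncomputable def sinParam (a b θ : ℝ) : ℝ := (a + b) / 2 + (b - a) / 2 * sin θ

namespace sinParam

variable {a b : ℝ}

theorem hasDerivAt (θ : ℝ) : HasDerivAt (sinParam a b) ((b - a) / 2 * cos θ) θ :=
  ((hasDerivAt_sin θ).const_mul _).const_add _

theorem continuous : Continuous (sinParam a b) := by
  unfold sinParam
  fun_prop

theorem strictMonoOn (hab : a < b) : StrictMonoOn (sinParam a b) (Icc (-(π / 2)) (π / 2)) :=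
  fun _ hx _ hy hxy => by
    have := strictMonoOn_sin hx hy hxy
    unfold sinParam
    nlinarith

theorem injOn (hab : a < b) : InjOn (sinParam a b) (Ioo (-(π / 2)) (π / 2)) :=
  (strictMonoOn hab).injOn.mono Ioo_subset_Icc_self

theorem image_Ioo (hab : a < b) : sinParam a b '' Ioo (-(π / 2)) (π / 2) = Ioo a b := by
  rw [continuous.continuousOn.image_Ioo_of_strictMonoOn (by linarith [pi_pos]) (strictMonoOn hab)]
  simp only [sinParam, sin_neg, sin_pi_div_two]
  congr 1 <;> ring

theorem mul_sub_eq_sq (θ : ℝ) :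
    (sinParam a b θ - a) * (b - sinParam a b θ) = ((b - a) / 2 * cos θ) ^ 2 := by
  unfold sinParam
  linear_combination (-((b - a) / 2) ^ 2) * sin_sq_add_cos_sq θ

theorem abs_deriv_smul_div_sqrt (hab : a < b) (g : ℝ → ℝ) {θ : ℝ}
    (hθ : θ ∈ Ioo (-(π / 2)) (π / 2)) :
    |(b - a) / 2 * cos θ| • (g (sinParam a b θ) /
      √((sinParam a b θ - a) * (b - sinParam a b θ))) = g (sinParam a b θ) := by
  have hJ : (b - a) / 2 * cos θ ≠ 0 :=
    mul_ne_zero (by linarith) (cos_pos_of_mem_Ioo hθ).ne'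
  rw [mul_sub_eq_sq, sqrt_sq_eq_abs, smul_eq_mul, mul_div_cancel₀ _ (abs_ne_zero.2 hJ)]

end sinParam

section

variable {a b : ℝ}

theorem setIntegral_Ioo_div_sqrt_eq (hab : a < b) (g : ℝ → ℝ) :
    ∫ x in Ioo a b, g x / √((x - a) * (b - x)) =
      ∫ θ in Ioo (-(π / 2)) (π / 2), g (sinParam a b θ) := by
  rw [← sinParam.image_Ioo hab, integral_image_eq_integral_abs_deriv_smul measurableSet_Ioo
    (fun θ _ => (sinParam.hasDerivAt θ).hasDerivWithinAt) (sinParam.injOn hab)]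
  exact setIntegral_congr_fun measurableSet_Ioo fun θ hθ =>
    sinParam.abs_deriv_smul_div_sqrt hab g hθ

theorem integrableOn_Ioo_div_sqrt (hab : a < b) {g : ℝ → ℝ} (hg : Continuous g) :
    IntegrableOn (fun x => g x / √((x - a) * (b - x))) (Ioo a b) := by
  rw [← sinParam.image_Ioo hab, integrableOn_image_iff_integrableOn_abs_deriv_smul
    measurableSet_Ioo (fun θ _ => (sinParam.hasDerivAt θ).hasDerivWithinAt) (sinParam.injOn hab)]
  refine IntegrableOn.congr_fun ?_ (fun θ hθ => (sinParam.abs_deriv_smul_div_sqrt hab g hθ).symm)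
    measurableSet_Ioo
  exact ((hg.comp sinParam.continuous).continuousOn.integrableOn_Icc).mono_set Ioo_subset_Icc_self

theorem setIntegral_Ioo_inv_sqrt (hab : a < b) :
    ∫ x in Ioo a b, 1 / √((x - a) * (b - x)) = π := by
  rw [setIntegral_Ioo_div_sqrt_eq hab, setIntegral_const,
    volume_real_Ioo_of_le (by linarith [pi_pos])]
  simp only [smul_eq_mul, mul_one]
  ring

theorem setIntegral_Ioo_sub_midpoint_div_sqrt (hab : a < b) :
    ∫ x in Ioo a b, (x - (a + b) / 2) / √((x - a) * (b - x)) = 0 := by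
  rw [setIntegral_Ioo_div_sqrt_eq hab, ← integral_Ioc_eq_integral_Ioo,
    ← intervalIntegral.integral_of_le (by linarith [pi_pos])]
  simp [sinParam, intervalIntegral.integral_const_mul]

theorem integrableOn_prod_mul {α β L : Type*} [MeasurableSpace α] [MeasurableSpace β]
    [NormedRing L] {μ : Measure α} {ν : Measure β} [SFinite μ] [SFinite ν] {f : α → L}
    {g : β → L} {s : Set α} {t : Set β} (hf : IntegrableOn f s μ) (hg : IntegrableOn g t ν) :
    IntegrableOn (fun z : α × β => f z.1 * g z.2) (s ×ˢ t) (μ.prod ν) := by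
  rw [IntegrableOn, ← Measure.prod_restrict]
  exact hf.mul_prod hg

theorem sine_kernel_eq_separated {x y : ℝ} (hx : 0 ≤ (x - a) * (b - x)) :
    (2 * x * y + 2 * a * b - (a + b) * (x + y)) / √((x - a) * (b - x) * (y - a) * (b - y)) =
      2 * ((x - (a + b) / 2) / √((x - a) * (b - x)) *
          ((y - (a + b) / 2) / √((y - a) * (b - y))))
        - (b - a) ^ 2 / 2 * (1 / √((x - a) * (b - x)) * (1 / √((y - a) * (b - y)))) := by
  rw [mul_assoc _ (y - a), sqrt_mul hx]
  simp only [div_eq_mul_inv, mul_inv]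
  ring

end

theorem double_integral_sine_kernel (a b : ℝ) (hab : a < b) :
    ∫ q in Ioo a b ×ˢ Ioo a b,
        (2 * q.1 * q.2 + 2 * a * b - (a + b) * (q.1 + q.2)) /
          Real.sqrt ((q.1 - a) * (b - q.1) * (q.2 - a) * (b - q.2))
      = - Real.pi ^ 2 * (b - a) ^ 2 / 2 := by
  set G : ℝ → ℝ := fun x => (x - (a + b) / 2) / √((x - a) * (b - x))
  set H : ℝ → ℝ := fun x => 1 / √((x - a) * (b - x))
  have hG : IntegrableOn G (Ioo a b) := integrableOn_Ioo_div_sqrt hab (by fun_prop)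
  have hH : IntegrableOn H (Ioo a b) := integrableOn_Ioo_div_sqrt hab continuous_const
  rw [setIntegral_congr_fun (measurableSet_Ioo.prod measurableSet_Ioo)
    fun q hq => sine_kernel_eq_separated (mul_pos (sub_pos.2 hq.1.1) (sub_pos.2 hq.1.2)).le,
    Measure.volume_eq_prod, integral_sub ((integrableOn_prod_mul hG hG).const_mul 2)
      ((integrableOn_prod_mul hH hH).const_mul _),
    integral_const_mul, integral_const_mul, setIntegral_prod_mul,
    setIntegral_prod_mul, setIntegral_Ioo_sub_midpoint_div_sqrt hab, setIntegral_Ioo_inv_sqrt hab]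
  ring
end

section
/- Let a < b be reals and p continuously differentiable on [a,b] with p′ > 0 on [a,b]. For λ ∈ (a,b), define h₋(λ) − h₊(λ) = √(λ−a)·√(b−λ) · ∫_a^b (p(λ)−p(s))/(π(λ−s)) · ds/√((s−a)(b−s)). Then h₋(λ) − h₊(λ) > 0 and moreover h₋(λ) − h₊(λ) ≥ √((λ−a)(b−λ)) · inf_{[a,b]} p′. -/
/-
By the mean value theorem every value of the difference quotient `(p λ - p s) / (λ - s)`,
extended by `p' λ` at `s = λ`, is a value of `p'` on `[a, b]`; hence it is bounded below by
`inf p' > 0` (and above by `max p'`, which gives integrability). Integrating against the arcsine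
probability density `1 / (π √((s - a) (b - s)))` on `(a, b)`, normalised because
`arcsin ((2 s - a - b) / (b - a))` is an antiderivative of `1 / √((s - a) (b - s))`, yields
both claims.
-/

open MeasureTheory Set Real

lemma hasDerivAt_arcsin_affine {a b s : ℝ} (hs : s ∈ Ioo a b) :
    HasDerivAt (fun s => arcsin ((2 * s - (a + b)) / (b - a))) (√((s - a) * (b - s)))⁻¹ s := by
  obtain ⟨has, hsb⟩ := hs
  have hba : 0 < b - a := by linarith
  set u := (2 * s - (a + b)) / (b - a) with hu
  have hu_gt : -1 < u := by rw [hu, lt_div_iff₀ hba]; linarith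
  have hu_lt : u < 1 := by rw [hu, div_lt_iff₀ hba]; linarith
  have hlin : HasDerivAt (fun s => (2 * s - (a + b)) / (b - a)) (2 / (b - a)) s := by
    simpa using (((hasDerivAt_id s).const_mul 2).sub_const (a + b)).div_const (b - a)
  refine ((hasDerivAt_arcsin hu_gt.ne' hu_lt.ne).comp s hlin).congr_deriv ?_
  have hsqrt : √(1 - u ^ 2) = 2 / (b - a) * √((s - a) * (b - s)) := by
    rw [← sqrt_sq (by positivity : 0 ≤ 2 / (b - a)), ← sqrt_mul (by positivity)]
    congr 1
    rw [hu]; field_simp; ring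
  have hsqrt_pos : 0 < √((s - a) * (b - s)) := sqrt_pos.2 (mul_pos (by linarith) (by linarith))
  rw [hsqrt]
  field_simp

lemma integrableOn_inv_sqrt_mul_sub (a b : ℝ) :
    IntegrableOn (fun s => (√((s - a) * (b - s)))⁻¹) (Ioc a b) :=
  intervalIntegral.integrableOn_deriv_of_nonneg (by fun_prop)
    (fun _ hs => hasDerivAt_arcsin_affine hs) (fun _ _ => by positivity)

lemma integral_inv_sqrt_mul_sub {a b : ℝ} (hab : a < b) :
    ∫ s in a..b, (√((s - a) * (b - s)))⁻¹ = π := by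
  rw [intervalIntegral.integral_eq_sub_of_hasDerivAt_of_le hab.le (by fun_prop)
    (fun _ hs => hasDerivAt_arcsin_affine hs)
    ((intervalIntegrable_iff_integrableOn_Ioc_of_le hab.le).2 (integrableOn_inv_sqrt_mul_sub a b))]
  have hba : b - a ≠ 0 := by linarith
  have h1 : (2 * b - (a + b)) / (b - a) = 1 := by field_simp; ring
  have h2 : (2 * a - (a + b)) / (b - a) = -1 := by field_simp; ring
  simp only [h1, h2, arcsin_one, arcsin_neg_one]
  ring

lemma integrableOn_arcsine_density (a b : ℝ) :
    IntegrableOn (fun s => (π * √((s - a) * (b - s)))⁻¹) (Ioo a b) := by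
  simp_rw [mul_inv]
  exact ((integrableOn_inv_sqrt_mul_sub a b).mono_set Ioo_subset_Ioc_self).const_mul π⁻¹

lemma setIntegral_arcsine_density {a b : ℝ} (hab : a < b) :
    ∫ s in Ioo a b, (π * √((s - a) * (b - s)))⁻¹ = 1 := by
  simp_rw [mul_inv]
  rw [integral_const_mul, ← integral_Ioc_eq_integral_Ioo, ← intervalIntegral.integral_of_le hab.le,
    integral_inv_sqrt_mul_sub hab, inv_mul_cancel₀ pi_ne_zero]

lemma mul_setIntegral_le_setIntegral_mul {α : Type*} [MeasurableSpace α] {μ : Measure α}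
    {S : Set α} {f w : α → ℝ} {m M : ℝ} (hS : MeasurableSet S) (hw : IntegrableOn w S μ)
    (hw_nonneg : ∀ x ∈ S, 0 ≤ w x) (hf : AEStronglyMeasurable f (μ.restrict S))
    (hmf : ∀ x ∈ S, m ≤ f x) (hfM : ∀ x ∈ S, f x ≤ M) :
    m * ∫ x in S, w x ∂μ ≤ ∫ x in S, f x * w x ∂μ := by
  have hfw : IntegrableOn (fun x => f x * w x) S μ := by
    refine hw.bdd_mul (c := max |m| |M|) hf ((ae_restrict_iff' hS).2 (.of_forall fun x hx => ?_))
    exact abs_le_max_abs_abs (hmf x hx) (hfM x hx)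
  rw [← integral_const_mul]
  exact setIntegral_mono_on (hw.const_mul m) hfw hS
    fun x hx => mul_le_mul_of_nonneg_right (hmf x hx) (hw_nonneg x hx)

lemma slope_mem_image_derivWithin {f : ℝ → ℝ} {a b x y : ℝ} (hf : ContinuousOn f (Icc a b))
    (hfd : DifferentiableOn ℝ f (Ioo a b)) (hx : x ∈ Icc a b) (hy : y ∈ Icc a b) (hxy : x ≠ y) :
    slope f x y ∈ derivWithin f (Icc a b) '' Icc a b := by
  wlog hlt : x < y generalizing x y
  · rw [slope_comm]
    exact this hy hx hxy.symm (lt_of_le_of_ne (not_lt.1 hlt) hxy.symm)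
  obtain ⟨c, hc, hc_eq⟩ := exists_deriv_eq_slope' f hlt (hf.mono (Icc_subset_Icc hx.1 hy.2))
    (hfd.mono (Ioo_subset_Ioo hx.1 hy.2))
  have hc_mem : c ∈ Ioo a b := ⟨hx.1.trans_lt hc.1, hc.2.trans_le hy.2⟩
  exact ⟨c, Ioo_subset_Icc_self hc_mem, by
    rw [derivWithin_of_mem_nhds (Icc_mem_nhds hc_mem.1 hc_mem.2), hc_eq]⟩

lemma sInf_image_derivWithin_le_integral {p : ℝ → ℝ} {a b lam : ℝ} (hab : a < b)
    (hp : ContDiffOn ℝ 1 p (Icc a b)) (hlam : lam ∈ Icc a b) :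
    sInf (derivWithin p (Icc a b) '' Icc a b) ≤
      ∫ s in Ioo a b,
        (if s = lam then derivWithin p (Icc a b) lam else (p lam - p s) / (lam - s)) /
          (π * √((s - a) * (b - s))) := by
  set D := derivWithin p (Icc a b)
  set q : ℝ → ℝ := fun s => if s = lam then D lam else (p lam - p s) / (lam - s)
  have hq : ∀ s ∈ Icc a b, q s ∈ D '' Icc a b := by
    intro s hs
    by_cases hsl : s = lam
    · simpa [q, hsl] using mem_image_of_mem D hlam
    · have hslope := slope_mem_image_derivWithin hp.continuousOn
        ((hp.differentiableOn one_ne_zero).mono Ioo_subset_Icc_self) hs hlam hsl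
      simp only [q, if_neg hsl]
      rwa [slope_def_field] at hslope
  have hD_compact : IsCompact (D '' Icc a b) :=
    isCompact_Icc.image_of_continuousOn
      (hp.continuousOn_derivWithin (uniqueDiffOn_Icc hab) le_rfl)
  obtain ⟨M, hM⟩ := hD_compact.bddAbove
  have hq_meas : AEStronglyMeasurable q (volume.restrict (Ioo a b)) := by
    have hp_meas : AEMeasurable p (volume.restrict (Ioo a b)) :=
      (hp.continuousOn.mono Ioo_subset_Icc_self).aemeasurable measurableSet_Ioo
    have hquot : AEMeasurable (fun s => (p lam - p s) / (lam - s))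
        (volume.restrict (Ioo a b)) := by fun_prop
    refine hquot.aestronglyMeasurable.congr ?_
    filter_upwards [ae_restrict_of_ae (volume.ae_ne lam)] with s hs
    simp [q, hs]
  have hbound := mul_setIntegral_le_setIntegral_mul measurableSet_Ioo (integrableOn_arcsine_density a b)
    (fun _ _ => by positivity) hq_meas
    (fun s hs => csInf_le hD_compact.bddBelow (hq s (Ioo_subset_Icc_self hs)))
    (fun s hs => hM (hq s (Ioo_subset_Icc_self hs)))
  simpa only [q, setIntegral_arcsine_density hab, mul_one, div_eq_mul_inv] using hbound

lemma IsCompact.sInf_image_pos {α : Type*} [TopologicalSpace α] {K : Set α} {f : α → ℝ}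
    (hK : IsCompact K) (hne : K.Nonempty) (hf : ContinuousOn f K) (hpos : ∀ x ∈ K, 0 < f x) :
    0 < sInf (f '' K) := by
  obtain ⟨c, hc, hc_eq⟩ := (hK.image_of_continuousOn hf).sInf_mem (hne.image f)
  exact hc_eq ▸ hpos c hc

theorem h_jump_positive_and_lower_bound (a b : ℝ) (hab : a < b) (p : ℝ → ℝ)
    (hp : ContDiffOn ℝ 1 p (Icc a b))
    (hp' : ∀ s ∈ Icc a b, 0 < derivWithin p (Icc a b) s)
    (lam : ℝ) (hlam : lam ∈ Ioo a b) :
    0 < Real.sqrt (lam - a) * Real.sqrt (b - lam) *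
        ∫ s in Ioo a b,
          (if s = lam then derivWithin p (Icc a b) lam else (p lam - p s) / (lam - s)) /
            (Real.pi * Real.sqrt ((s - a) * (b - s)))
    ∧ Real.sqrt ((lam - a) * (b - lam)) * sInf (derivWithin p (Icc a b) '' Icc a b) ≤
        Real.sqrt (lam - a) * Real.sqrt (b - lam) *
          ∫ s in Ioo a b,
            (if s = lam then derivWithin p (Icc a b) lam else (p lam - p s) / (lam - s)) /
              (Real.pi * Real.sqrt ((s - a) * (b - s))) := by
  have hlower := sInf_image_derivWithin_le_integral hab hp (Ioo_subset_Icc_self hlam)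
  have hinf_pos : 0 < sInf (derivWithin p (Icc a b) '' Icc a b) :=
    isCompact_Icc.sInf_image_pos (nonempty_Icc.2 hab.le)
      (hp.continuousOn_derivWithin (uniqueDiffOn_Icc hab) le_rfl) hp'
  have hsqrt_pos : 0 < √(lam - a) * √(b - lam) :=
    mul_pos (sqrt_pos.2 (sub_pos.2 hlam.1)) (sqrt_pos.2 (sub_pos.2 hlam.2))
  rw [sqrt_mul (sub_pos.2 hlam.1).le]
  exact ⟨mul_pos hsqrt_pos (hinf_pos.trans_le hlower), mul_le_mul_of_nonneg_left hlower hsqrt_pos.le⟩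
end

section
/- For 0 < α < π, the function r(z) = (1 + i√(z²−1)sin(α/2))/(1 + iz tan(α/2)) is holomorphic and non-vanishing on ℂ \ ([−1,1] ∪ {i cot(α/2)}), and r(z) → cos(α/2) as z → ∞. -/
open Set Filter Complex Bornology Topology

/-!
Any continuous `s` on `ℂ \ [-1, 1]` with `s² = z² - 1` differs from the explicit branch
`z * (1 - z⁻²) ^ (1/2)` by a continuous sign, which is constant because the complement of a segment
is connected, and the normalisation `s x / x → 1` makes it `+1`. For this branch `s z / z → 1` at
infinity, which gives the limit `sin / tan = cos`. The numerator can only vanish where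
`z² = -cot² (α/2)`: the root `i cot (α/2)` is the excluded pole, and at `-i cot (α/2)` the branch
equals `-i √(cot² + 1)`, which makes the numerator positive.
-/

lemma isPreconnected_compl_image_ofReal_Icc (a b : ℝ) :
    IsPreconnected (ofReal '' Icc a b)ᶜ := by
  have hK : (ofReal '' Icc a b)ᶜ =
      {z : ℂ | z.im < 0} ∪ {z | b < z.re} ∪ {z | 0 < z.im} ∪ {z | z.re < a} := by
    ext z
    simp only [mem_compl_iff, mem_image, mem_Icc, mem_union, mem_ofPred_eq, not_exists, not_and]
    constructor
    · intro h
      by_contra! h'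
      exact h z.re ⟨h'.2, h'.1.1.2⟩
        (Complex.ext rfl (by rw [ofReal_im]; linarith [h'.1.1.1, h'.1.2]))
    · rintro (((h | h) | h) | h) x ⟨hax, hxb⟩ rfl <;>
      simp only [ofReal_re, ofReal_im] at h <;> linarith
  rw [hK]
  refine ((((convex_halfSpace_im_lt 0).isPreconnected.union (b + 1 - I) ?_ ?_
    (convex_halfSpace_re_gt b).isPreconnected).union (b + 1 + I) ?_ ?_
    (convex_halfSpace_im_gt 0).isPreconnected).union (a - 1 - I) ?_ ?_
    (convex_halfSpace_re_lt a).isPreconnected) <;> simp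

lemma mem_image_ofReal_Icc_of_sq_eq {z : ℂ} {x : ℝ} (hx0 : 0 ≤ x) (hx1 : x ≤ 1)
    (hz : z ^ 2 = x) : z ∈ ofReal '' Icc (-1) 1 := by
  have hre := congrArg re hz
  have him := congrArg im hz
  simp only [sq, mul_re, mul_im, ofReal_re, ofReal_im] at hre him
  have hzim : z.im = 0 := by
    rcases mul_eq_zero.mp (by linarith : z.re * z.im = 0) with h | h
    · nlinarith
    · exact h
  exact ⟨z.re, ⟨by nlinarith, by nlinarith⟩, Complex.ext rfl (by simp [hzim])⟩

lemma one_sub_inv_sq_mem_slitPlane {z : ℂ} (hz : z ∉ ofReal '' Icc (-1) 1) :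
    1 - (z ^ 2)⁻¹ ∈ slitPlane := by
  by_contra h
  rw [mem_slitPlane_iff, not_or, not_lt, not_not] at h
  set u := (z ^ 2)⁻¹
  have hu : u = ((1 - (1 - u).re : ℝ) : ℂ) := Complex.ext (by simp) (by simpa using h.2)
  refine hz (mem_image_ofReal_Icc_of_sq_eq (x := (1 - (1 - u).re)⁻¹)
    (inv_nonneg.mpr (by linarith [h.1])) (inv_le_one_of_one_le₀ (by linarith [h.1])) ?_)
  rw [ofReal_inv, ← hu, inv_inv]

noncomputable def sqrtSqSubOne (z : ℂ) : ℂ := z * (1 - (z ^ 2)⁻¹) ^ (2⁻¹ : ℂ)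

lemma sqrtSqSubOne_sq {z : ℂ} (hz : z ≠ 0) : sqrtSqSubOne z ^ 2 = z ^ 2 - 1 := by
  rw [sqrtSqSubOne, mul_pow, cpow_ofNat_inv_pow, mul_sub, mul_inv_cancel₀ (pow_ne_zero 2 hz),
    mul_one]

lemma ne_zero_of_notMem_image_ofReal_Icc {z : ℂ} (hz : z ∉ ofReal '' Icc (-1) 1) : z ≠ 0 := by
  rintro rfl
  exact hz ⟨0, by norm_num, by simp⟩

lemma sqrtSqSubOne_ne_zero {z : ℂ} (hz : z ∉ ofReal '' Icc (-1) 1) : sqrtSqSubOne z ≠ 0 := by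
  intro h
  have h1 : z ^ 2 = ((1 : ℝ) : ℂ) := by
    have := sqrtSqSubOne_sq (ne_zero_of_notMem_image_ofReal_Icc hz)
    rw [h] at this
    push_cast
    linear_combination -this
  exact hz (mem_image_ofReal_Icc_of_sq_eq zero_le_one le_rfl h1)

lemma differentiableOn_sqrtSqSubOne :
    DifferentiableOn ℂ sqrtSqSubOne (ofReal '' Icc (-1) 1)ᶜ := by
  intro z hz
  have h0 := pow_ne_zero 2 (ne_zero_of_notMem_image_ofReal_Icc hz)
  have hw : DifferentiableAt ℂ (fun w : ℂ => 1 - (w ^ 2)⁻¹) z := by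
    fun_prop (disch := exact h0)
  exact (differentiableAt_id.mul (hw.cpow (differentiableAt_const _)
    (one_sub_inv_sq_mem_slitPlane hz))).differentiableWithinAt

lemma tendsto_sqrtSqSubOne_div_self :
    Tendsto (fun z => sqrtSqSubOne z / z) (cobounded ℂ) (𝓝 1) := by
  have hw : Tendsto (fun z : ℂ => 1 - (z ^ 2)⁻¹) (cobounded ℂ) (𝓝 1) := by
    have h := (tendsto_const_nhds (x := (1 : ℂ))).sub
      ((tendsto_inv₀_cobounded (α := ℂ)).pow 2)
    rw [zero_pow two_ne_zero, sub_zero] at h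
    simpa only [inv_pow] using h
  have hroot := (continuousAt_cpow_const (b := 2⁻¹) one_mem_slitPlane).tendsto.comp hw
  rw [Function.comp_def, one_cpow] at hroot
  refine hroot.congr' ?_
  filter_upwards [eventually_ne_cobounded 0] with z hz
  rw [sqrtSqSubOne, mul_div_cancel_left₀ _ hz]

lemma sqrtSqSubOne_neg_I_mul {y : ℝ} (hy : 0 < y) :
    sqrtSqSubOne (-(I * y)) = -(I * √(y ^ 2 + 1)) := by
  have hw : 1 - ((-(I * y)) ^ 2)⁻¹ = ((1 + (y ^ 2)⁻¹ : ℝ) : ℂ) := by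
    push_cast
    rw [neg_sq, mul_pow, I_sq]
    ring
  have hsqrt : y * √(1 + (y ^ 2)⁻¹) = √(y ^ 2 + 1) := by
    rw [← Real.sqrt_sq hy.le, ← Real.sqrt_mul (sq_nonneg _), Real.sqrt_sq hy.le, mul_add,
      mul_inv_cancel₀ (by positivity), mul_one, add_comm]
  rw [sqrtSqSubOne, hw, ← ofReal_ofNat, ← ofReal_inv, ← ofReal_cpow (by positivity),
    show (2 : ℝ)⁻¹ = 1 / 2 by norm_num, ← Real.sqrt_eq_rpow, ← hsqrt]
  push_cast
  ring

lemma eqOn_of_sq_eq_sq {X 𝕜 : Type*} [TopologicalSpace X] [NormedField 𝕜] {S : Set X}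
    (hS : IsPreconnected S) {f g : X → 𝕜} (hf : ContinuousOn f S) (hg : ContinuousOn g S)
    (hsq : ∀ x ∈ S, f x ^ 2 = g x ^ 2) (hg0 : ∀ x ∈ S, g x ≠ 0) {x₀ : X} (hx₀ : x₀ ∈ S)
    (hfg : f x₀ = g x₀) : EqOn f g S := by
  have hmaps : MapsTo (fun x => f x / g x) S {1, -1} := by
    intro x hx
    rcases sq_eq_sq_iff_eq_or_eq_neg.mp (hsq x hx) with h | h <;>
      simp [h, hg0 x hx]
  intro x hx
  have h := hS.constant_of_mapsTo (toFinite _).isDiscrete (hf.div hg hg0) hmaps hx hx₀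
  rwa [Pi.div_apply, Pi.div_apply, hfg, div_self (hg0 x₀ hx₀), div_eq_one_iff_eq (hg0 x hx)] at h

lemma eqOn_sqrtSqSubOne {s : ℂ → ℂ} (hs : ContinuousOn s (ofReal '' Icc (-1) 1)ᶜ)
    (hsq : ∀ z ∈ (ofReal '' Icc (-1) 1)ᶜ, s z ^ 2 = z ^ 2 - 1)
    (hsx : Tendsto (fun x : ℝ => s x / x) atTop (𝓝 1)) :
    EqOn s sqrtSqSubOne (ofReal '' Icc (-1) 1)ᶜ := by
  have hsσ : ∀ z ∈ (ofReal '' Icc (-1) 1)ᶜ, s z ^ 2 = sqrtSqSubOne z ^ 2 := fun z hz => by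
    rw [hsq z hz, sqrtSqSubOne_sq (ne_zero_of_notMem_image_ofReal_Icc hz)]
  have hσx : Tendsto (fun x : ℝ => sqrtSqSubOne x / x) atTop (𝓝 1) :=
    tendsto_sqrtSqSubOne_div_self.comp (RCLike.tendsto_ofReal_atTop_cobounded ℂ)
  have hsum : Tendsto (fun x : ℝ => (s x + sqrtSqSubOne x) / x) atTop (𝓝 2) := by
    simpa only [add_div, one_add_one_eq_two] using hsx.add hσx
  obtain ⟨x, hx1, hx⟩ :=
    ((eventually_gt_atTop 1).and (hsum.eventually_ne two_ne_zero)).exists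
  have hxK : (x : ℂ) ∉ ofReal '' Icc (-1) 1 := by
    rintro ⟨y, hy, hyx⟩
    exact hx1.not_ge (ofReal_injective hyx ▸ hy.2)
  refine eqOn_of_sq_eq_sq (isPreconnected_compl_image_ofReal_Icc _ _) hs
    differentiableOn_sqrtSqSubOne.continuousOn hsσ (fun z hz => sqrtSqSubOne_ne_zero hz) hxK ?_
  refine (sq_eq_sq_iff_eq_or_eq_neg.mp (hsσ x hxK)).resolve_right fun h => hx ?_
  rw [h, neg_add_cancel, zero_div]

lemma one_add_I_mul_sqrtSqSubOne_mul_ne_zero {m c : ℝ} (hm : 0 < m) (hc : 0 < c)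
    (hmc : m ^ 2 * (c ^ 2 + 1) = 1) {z : ℂ} (hz0 : z ≠ 0) (hz : z ≠ I * c) :
    1 + I * sqrtSqSubOne z * m ≠ 0 := by
  intro h
  have hσm : sqrtSqSubOne z * m = I := by
    linear_combination (-I) * h + sqrtSqSubOne z * m * I_sq
  have hmcC : (m : ℂ) ^ 2 * (c ^ 2 + 1) = 1 := by exact_mod_cast hmc
  have hroots : (m : ℂ) ^ 2 * ((z - I * c) * (z + I * c)) = 0 := by
    linear_combination (-(m : ℂ) ^ 2) * sqrtSqSubOne_sq hz0 + (sqrtSqSubOne z * m + I) * hσm +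
      hmcC + (1 - (m : ℂ) ^ 2 * c ^ 2) * I_sq
  obtain rfl : z = -(I * c) := by
    rcases mul_eq_zero.mp hroots with h | h
    · exact absurd h (pow_ne_zero 2 (ofReal_ne_zero.mpr hm.ne'))
    · exact (mul_eq_zero.mp h).resolve_left (sub_ne_zero.mpr hz) |> eq_neg_of_add_eq_zero_left
  rw [sqrtSqSubOne_neg_I_mul hc] at hσm
  have hreal : ((√(c ^ 2 + 1) * m + 1 : ℝ) : ℂ) = 0 := by
    push_cast
    linear_combination I * hσm + (√(c ^ 2 + 1) * m + 1) * I_sq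
  have hpos : 0 < √(c ^ 2 + 1) * m := mul_pos (Real.sqrt_pos.mpr (by positivity)) hm
  exact absurd (ofReal_eq_zero.mp hreal) (by linarith)

lemma one_add_I_mul_mul_ne_zero {t : ℝ} {z : ℂ} (hz : z ≠ I * (t⁻¹ : ℝ)) :
    1 + I * z * t ≠ 0 := by
  intro h
  rcases eq_or_ne t 0 with rfl | ht
  · simp at h
  rw [ofReal_inv, Ne, eq_mul_inv_iff_mul_eq₀ (ofReal_ne_zero.mpr ht)] at hz
  apply hz
  linear_combination (-I) * h + z * t * I_sq

lemma tendsto_add_mul_div_add_mul {𝕜 : Type*} [NormedField 𝕜] {f : 𝕜 → 𝕜}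
    (hf : Tendsto (fun z => f z / z) (cobounded 𝕜) (𝓝 1)) (a b c d : 𝕜) (hd : d ≠ 0) :
    Tendsto (fun z => (a + b * f z) / (c + d * z)) (cobounded 𝕜) (𝓝 (b / d)) := by
  have hnum : Tendsto (fun z => a * z⁻¹ + b * (f z / z)) (cobounded 𝕜) (𝓝 (a * 0 + b * 1)) :=
    (tendsto_inv₀_cobounded.const_mul a).add (hf.const_mul b)
  have hden : Tendsto (fun z => c * z⁻¹ + d) (cobounded 𝕜) (𝓝 (c * 0 + d)) :=
    (tendsto_inv₀_cobounded.const_mul c).add_const d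
  rw [mul_zero, zero_add, mul_one] at hnum
  rw [mul_zero, zero_add] at hden
  refine (hnum.div hden hd).congr' ?_
  filter_upwards [eventually_ne_cobounded 0] with z hz
  simp only [Pi.div_apply]
  field_simp

lemma Real.sin_div_tan {x : ℝ} (hx : Real.sin x ≠ 0) : Real.sin x / Real.tan x = Real.cos x := by
  rw [Real.tan_eq_sin_div_cos, div_div_cancel₀ hx]

lemma Real.sin_sq_mul_cos_div_sin_sq_add_one {x : ℝ} (hx : Real.sin x ≠ 0) :
    Real.sin x ^ 2 * ((Real.cos x / Real.sin x) ^ 2 + 1) = 1 := by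
  field_simp
  exact Real.cos_sq_add_sin_sq x

theorem r_function_holomorphic_nonvanishing (α : ℝ) (hα1 : 0 < α) (hα2 : α < Real.pi)
    (s : ℂ → ℂ)
    (hs : DifferentiableOn ℂ s ((fun x : ℝ => (x : ℂ)) '' Icc (-1 : ℝ) 1)ᶜ)
    (hs2 : ∀ z ∈ ((fun x : ℝ => (x : ℂ)) '' Icc (-1 : ℝ) 1)ᶜ, s z ^ 2 = z ^ 2 - 1)
    (hsnorm : Tendsto (fun x : ℝ => s x / x) atTop (nhds 1))
    (r : ℂ → ℂ)
    (hr : ∀ z, r z =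
      (1 + Complex.I * s z * (Real.sin (α / 2) : ℂ)) /
        (1 + Complex.I * z * (Real.tan (α / 2) : ℂ))) :
    DifferentiableOn ℂ r
        ((fun x : ℝ => (x : ℂ)) '' Icc (-1 : ℝ) 1 ∪
          {Complex.I * ((Real.cos (α / 2) / Real.sin (α / 2) : ℝ) : ℂ)})ᶜ ∧
    (∀ z ∈ ((fun x : ℝ => (x : ℂ)) '' Icc (-1 : ℝ) 1 ∪
          {Complex.I * ((Real.cos (α / 2) / Real.sin (α / 2) : ℝ) : ℂ)})ᶜ, r z ≠ 0) ∧
    Tendsto r (cobounded ℂ) (nhds ((Real.cos (α / 2) : ℂ))) := by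
  obtain rfl : r = _ := funext hr
  have hsin : 0 < Real.sin (α / 2) := Real.sin_pos_of_pos_of_lt_pi (by linarith) (by linarith)
  have htan : 0 < Real.tan (α / 2) :=
    Real.tan_pos_of_pos_of_lt_pi_div_two (by linarith) (by linarith)
  have hcot : Real.cos (α / 2) / Real.sin (α / 2) = (Real.tan (α / 2))⁻¹ := by
    rw [Real.tan_eq_sin_div_cos, inv_div]
  have hsσ := eqOn_sqrtSqSubOne hs.continuousOn hs2 hsnorm
  rw [compl_union]
  have hden (z : ℂ) (hz : z ≠ I * ((Real.cos (α / 2) / Real.sin (α / 2) : ℝ) : ℂ)) :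
      1 + I * z * Real.tan (α / 2) ≠ 0 :=
    one_add_I_mul_mul_ne_zero (hcot ▸ hz)
  refine ⟨?_, fun z hz => ?_, ?_⟩
  · exact ((((hs.mono inter_subset_left).const_mul I).mul_const _).const_add 1).div
      (by fun_prop) fun z hz => hden z hz.2
  · dsimp only
    rw [hsσ hz.1]
    exact div_ne_zero (one_add_I_mul_sqrtSqSubOne_mul_ne_zero hsin (hcot ▸ inv_pos.mpr htan)
      (Real.sin_sq_mul_cos_div_sin_sq_add_one hsin.ne')
      (ne_zero_of_notMem_image_ofReal_Icc hz.1) hz.2) (hden z hz.2)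
  · have hlim := tendsto_add_mul_div_add_mul tendsto_sqrtSqSubOne_div_self 1
      (I * Real.sin (α / 2)) 1 (I * Real.tan (α / 2))
      (mul_ne_zero I_ne_zero (ofReal_ne_zero.mpr htan.ne'))
    rw [mul_div_mul_left _ _ I_ne_zero, ← ofReal_div, Real.sin_div_tan hsin.ne'] at hlim
    refine hlim.congr' ?_
    filter_upwards [isBounded_def.mp (isCompact_Icc.image continuous_ofReal).isBounded]
      with z hz
    rw [← hsσ hz]
    ring
end
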